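/- arXiv:0705.0670 — 2 statements merged into one kernel-verified Lean document; each statement's English description precedes it below -/
import Mathlib

section
/- Let A = ⟨Q, N, f⟩ be a cellular automaton over a finitely generated group G with finite generating set S, and suppose N ⊆ D_{r,S}. Then for all configurations c_1, c_2: d_{B,S}(F_A(c_1), F_A(c_2)) ≤ γ_S(r)^2 · d_{B,S}(c_1, c_2), where γ_S is the growth function. In particular F_A is Lipschitz for the Besicovitch pseudodistance with respect to word-metric balls, for any finitely generated group. -/
open Filter

noncomputable def hamDist {G Q : Type*} (U : Set G) (c₁ c₂ : G → Q) : ℕ :=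
  {x ∈ U | c₁ x ≠ c₂ x}.ncard

def wordBall {G : Type*} [Group G] (S : Set G) (n : ℕ) : Set G :=
  {g | ∃ l : List G, (∀ x ∈ l, x ∈ S ∨ x⁻¹ ∈ S) ∧ l.length ≤ n ∧ l.prod = g}

noncomputable def besDistBall {G Q : Type*} [Group G] (S : Set G) (c₁ c₂ : G → Q) : ℝ :=
  limsup (fun n => (hamDist (wordBall S n) c₁ c₂ : ℝ) / (wordBall S n).ncard) atTop

def caMap {G Q : Type*} [Group G] (N : Finset G) (f : (N → Q) → Q) :
    (G → Q) → G → Q :=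
  fun c g => f (fun x => c (g * x.1))

/-! If `F_A c₁` and `F_A c₂` differ at `g`, then `c₁` and `c₂` differ at some `g * x`
with `x ∈ N ⊆ D_r`, a point of `D_n D_r = D_{n+r}`. Hence the disagreements of the images
inside `D_n` number at most `|N|` times the disagreements of `c₁, c₂` inside `D_{n+r}`, and
dividing by `γ(n)` costs one more factor `γ(r)` because `γ(n + r) ≤ γ(n) γ(r)`. The index
shift by `r` does not change the limsup. -/

open scoped Pointwise

section wordBall

variable {G : Type*} [Group G] {S : Set G}

lemma one_mem_wordBall (S : Set G) (n : ℕ) : (1 : G) ∈ wordBall S n :=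
  ⟨[], by simp, by simp, by simp⟩

lemma wordBall_zero (S : Set G) : wordBall S 0 = {1} := by
  ext g
  constructor
  · rintro ⟨l, -, hl, rfl⟩
    simp [List.length_eq_zero_iff.mp (Nat.le_zero.mp hl)]
  · rintro rfl
    exact one_mem_wordBall S 0

lemma wordBall_one_subset (S : Set G) : wordBall S 1 ⊆ insert 1 (S ∪ S⁻¹) := by
  rintro g ⟨l, hS, hl, rfl⟩
  match l, hS, hl with
  | [], _, _ => simp
  | [x], hS, _ => simpa using Or.inr (hS x (by simp))

lemma wordBall_add (S : Set G) (m n : ℕ) :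
    wordBall S (m + n) = wordBall S m * wordBall S n := by
  ext g
  constructor
  · rintro ⟨l, hS, hl, rfl⟩
    refine ⟨(l.take m).prod,
      ⟨l.take m, fun x hx => hS x (List.mem_of_mem_take hx), by simp, rfl⟩,
      (l.drop m).prod, ⟨l.drop m, fun x hx => hS x (List.mem_of_mem_drop hx), ?_, rfl⟩,
      by simp only [← List.prod_append, List.take_append_drop]⟩
    simp only [List.length_drop]
    omega
  · rintro ⟨_, ⟨l₁, hS₁, hl₁, rfl⟩, _, ⟨l₂, hS₂, hl₂, rfl⟩, rfl⟩
    refine ⟨l₁ ++ l₂, ?_, by simp only [List.length_append]; omega, List.prod_append⟩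
    simpa only [List.mem_append, or_imp, forall_and] using ⟨hS₁, hS₂⟩

lemma finite_wordBall (hS : S.Finite) (n : ℕ) : (wordBall S n).Finite := by
  induction n with
  | zero => simp [wordBall_zero]
  | succ n ih =>
    rw [wordBall_add]
    exact ih.mul (((hS.union hS.inv).insert 1).subset (wordBall_one_subset S))

lemma ncard_wordBall_add_le (S : Set G) (m n : ℕ) :
    (wordBall S (m + n)).ncard ≤ (wordBall S m).ncard * (wordBall S n).ncard := by
  simpa only [wordBall_add, Nat.card_coe_set_eq] using
    Set.natCard_mul_le (s := wordBall S m) (t := wordBall S n)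

lemma ncard_wordBall_pos (hS : S.Finite) (n : ℕ) : 0 < (wordBall S n).ncard :=
  (Set.ncard_pos (finite_wordBall hS n)).2 ⟨1, one_mem_wordBall S n⟩

end wordBall

section hamDist

variable {G Q : Type*}

lemma hamDist_le_ncard {U : Set G} (hU : U.Finite) (c₁ c₂ : G → Q) :
    hamDist U c₁ c₂ ≤ U.ncard :=
  Set.ncard_le_ncard (Set.sep_subset _ _) hU

lemma hamDist_caMap_le [Group G] (N : Finset G) (f : (N → Q) → Q) {U V : Set G}
    (hV : V.Finite) (hUV : U * N ⊆ V) (c₁ c₂ : G → Q) :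
    hamDist U (caMap N f c₁) (caMap N f c₂) ≤ hamDist V c₁ c₂ * N.card := by
  set D := {h ∈ V | c₁ h ≠ c₂ h}
  have hsub : {g ∈ U | caMap N f c₁ g ≠ caMap N f c₂ g} ⊆ D / N := by
    rintro g ⟨hgU, hg⟩
    obtain ⟨x, hx⟩ : ∃ x : N, c₁ (g * x) ≠ c₂ (g * x) := by
      by_contra! h
      exact hg (congrArg f (funext h))
    exact ⟨g * x, ⟨hUV (Set.mul_mem_mul hgU x.2), hx⟩, x, x.2, mul_div_cancel_right g x⟩
  calc hamDist U (caMap N f c₁) (caMap N f c₂)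
      ≤ (D / N).ncard :=
        Set.ncard_le_ncard hsub ((hV.subset (Set.sep_subset _ _)).div N.finite_toSet)
    _ ≤ D.ncard * (N : Set G).ncard := by
      simpa only [Nat.card_coe_set_eq] using Set.natCard_div_le (s := D) (t := (N : Set G))
    _ = hamDist V c₁ c₂ * N.card := by rw [Set.ncard_coe_finset]; rfl

end hamDist

lemma limsup_le_mul_limsup_of_le_shift {a b : ℕ → ℝ} {C : ℝ} {r : ℕ} (hC : 0 ≤ C)
    (ha : ∀ n, 0 ≤ a n) (hb₀ : ∀ n, 0 ≤ b n) (hb : BddAbove (Set.range b))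
    (hab : ∀ n, a n ≤ C * b (n + r)) :
    limsup a atTop ≤ C * limsup b atTop := by
  obtain ⟨B, hB⟩ := hb
  have hb_shift : IsBoundedUnder (· ≤ ·) atTop (fun n => b (n + r)) :=
    isBoundedUnder_of ⟨B, fun n => hB ⟨n + r, rfl⟩⟩
  have hC_bdd : IsBoundedUnder (· ≤ ·) atTop (fun _ : ℕ => C) := isBoundedUnder_const
  calc limsup a atTop
      ≤ limsup (fun n => C * b (n + r)) atTop :=
        limsup_le_limsup (Eventually.of_forall hab) (isCoboundedUnder_le_of_le atTop ha)
          (isBoundedUnder_le_mul_of_nonneg (Frequently.of_forall fun _ => hC) hC_bdd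
            (Eventually.of_forall fun n => hb₀ (n + r)) hb_shift)
    _ ≤ limsup (fun _ => C) atTop * limsup (fun n => b (n + r)) atTop :=
        limsup_mul_le (Frequently.of_forall fun _ => hC) hC_bdd
          (Eventually.of_forall fun n => hb₀ (n + r)) hb_shift
    _ = C * limsup b atTop := by rw [limsup_const, limsup_nat_add]

section besicovitch

variable {G Q : Type*} [Group G] {S : Set G}

lemma hamDist_div_ncard_wordBall_le_one (hS : S.Finite) (c₁ c₂ : G → Q) (n : ℕ) :
    (hamDist (wordBall S n) c₁ c₂ : ℝ) / (wordBall S n).ncard ≤ 1 :=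
  div_le_one_of_le₀ (by exact_mod_cast hamDist_le_ncard (finite_wordBall hS n) c₁ c₂)
    (Nat.cast_nonneg _)

lemma hamDist_caMap_div_le (hS : S.Finite) (N : Finset G) (f : (N → Q) → Q) {r : ℕ}
    (hNr : (N : Set G) ⊆ wordBall S r) (c₁ c₂ : G → Q) (n : ℕ) :
    (hamDist (wordBall S n) (caMap N f c₁) (caMap N f c₂) : ℝ) / (wordBall S n).ncard ≤
      ((wordBall S r).ncard : ℝ) ^ 2 *
        ((hamDist (wordBall S (n + r)) c₁ c₂ : ℝ) / (wordBall S (n + r)).ncard) := by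
  have hγn : (0 : ℝ) < (wordBall S n).ncard := by exact_mod_cast ncard_wordBall_pos hS n
  have hγnr : (0 : ℝ) < (wordBall S (n + r)).ncard := by
    exact_mod_cast ncard_wordBall_pos hS _
  have hγ_add :
      ((wordBall S (n + r)).ncard : ℝ) ≤ (wordBall S n).ncard * (wordBall S r).ncard := by
    exact_mod_cast ncard_wordBall_add_le S n r
  have hN : (N.card : ℝ) ≤ (wordBall S r).ncard := by
    rw [← Set.ncard_coe_finset]
    exact_mod_cast Set.ncard_le_ncard hNr (finite_wordBall hS r)
  have hUV : wordBall S n * N ⊆ wordBall S (n + r) :=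
    wordBall_add S n r ▸ Set.mul_subset_mul_left hNr
  have hF : (hamDist (wordBall S n) (caMap N f c₁) (caMap N f c₂) : ℝ) ≤
      hamDist (wordBall S (n + r)) c₁ c₂ * N.card := by
    exact_mod_cast hamDist_caMap_le N f (finite_wordBall hS _) hUV c₁ c₂
  set H : ℝ := (hamDist (wordBall S (n + r)) c₁ c₂ : ℝ)
  set γr : ℝ := ((wordBall S r).ncard : ℝ)
  calc _ ≤ H * γr / (wordBall S n).ncard := by gcongr; exact hF.trans (by gcongr)
    _ ≤ γr ^ 2 * (H / (wordBall S (n + r)).ncard) := by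
      rw [mul_div_assoc', div_le_div_iff₀ hγn hγnr]
      calc H * γr * (wordBall S (n + r)).ncard ≤ H * γr * ((wordBall S n).ncard * γr) := by
            gcongr
        _ = γr ^ 2 * H * (wordBall S n).ncard := by ring

end besicovitch

theorem ca_lipschitz_besicovitch_ball_general {G Q : Type*} [Group G]
    (S : Set G) (hSfin : S.Finite)
    (N : Finset G) (f : (N → Q) → Q)
    (r : ℕ) (hNr : (N : Set G) ⊆ wordBall S r) (c₁ c₂ : G → Q) :
    besDistBall S (caMap N f c₁) (caMap N f c₂) ≤
      ((wordBall S r).ncard : ℝ) ^ 2 * besDistBall S c₁ c₂ :=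
  limsup_le_mul_limsup_of_le_shift (by positivity) (fun _ => by positivity)
    (fun _ => by positivity)
    ⟨1, by rintro _ ⟨n, rfl⟩; exact hamDist_div_ncard_wordBall_le_one hSfin c₁ c₂ n⟩
    (hamDist_caMap_div_le hSfin N f hNr c₁ c₂)

/-- If the neighborhood of a CA is contained in the ball of radius `r`, then its global
map is Lipschitz with constant `γ_S(r)²` for the Besicovitch pseudodistance with
respect to word-metric balls. -/
theorem ca_lipschitz_besicovitch_ball {G Q : Type*} [Group G] [Fintype Q]
    (hQ : 2 ≤ Fintype.card Q)
    (S : Set G) (hSfin : S.Finite) (hSgen : Subgroup.closure S = ⊤)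
    (N : Finset G) (hN : N.Nonempty) (f : (N → Q) → Q)
    (r : ℕ) (hNr : (N : Set G) ⊆ wordBall S r) (c₁ c₂ : G → Q) :
    besDistBall S (caMap N f c₁) (caMap N f c₂) ≤
      ((wordBall S r).ncard : ℝ) ^ 2 * besDistBall S c₁ c₂ :=
  ca_lipschitz_besicovitch_ball_general S hSfin N f r hNr c₁ c₂
end

section
/- Let G be a finitely generated group and {X_n} an exhaustive sequence containing an amenable subsequence. If a cellular automaton A over G is Besicovitch injective with respect to {X_n} (i.e., d_B(c_1,c_2) > 0 implies d_B(F_A(c_1), F_A(c_2)) > 0), then A is preinjective, i.e., A has no pair of mutually erasable patterns. -/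
open Filter Pointwise

noncomputable def besDist {G Q : Type*} (X : ℕ → Finset G) (c₁ c₂ : G → Q) : ℝ :=
  limsup (fun n => (hamDist (X n : Set G) c₁ c₂ : ℝ) / (X n).card) atTop

def IsExhaustive {G : Type*} (X : ℕ → Finset G) : Prop :=
  (∀ n, X n ⊆ X (n + 1)) ∧ ∀ g : G, ∃ n, g ∈ X n

def IsFolner {G : Type*} [Group G] [DecidableEq G] (X : ℕ → Finset G) : Prop :=
  IsExhaustive X ∧ ∀ E : Finset G,
    Tendsto (fun n => (((X n * E⁻¹) \ X n).card : ℝ) / (X n).card) atTop (nhds 0)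

/-- Two patterns `p₁, p₂` with support `E` are mutually erasable for the CA. -/
def MutuallyErasable {G Q : Type*} [Group G] (N : Finset G) (f : (N → Q) → Q)
    (E : Finset G) (p₁ p₂ : G → Q) : Prop :=
  ∀ c₁ c₂ : G → Q, Set.EqOn c₁ p₁ E → Set.EqOn c₂ p₂ E →
    Set.EqOn c₁ c₂ ((E : Set G)ᶜ) → caMap N f c₁ = caMap N f c₂

/-!
Let `p₁ ≠ p₂` be mutually erasable patterns on `E`, differing at `g₀ ∈ E`. Choose by Zorn a maximal
set `T` such that the tiles `t • E`, `t ∈ T`, are pairwise disjoint; maximality gives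
`G = T * (E * E⁻¹)`. Let `c₁` carry `p₁` on every tile and `c₂` carry `p₂` on every tile. Switching
one tile from `p₁` to `p₂` does not change the image, and each cell of the image sees only finitely
many tiles, so `F c₁ = F c₂`. But `c₁` and `c₂` differ on the syndetic set `T * {g₀}`, whose density
in almost invariant Følner sets is at least `1 / |E * E⁻¹|`, so `d_B(c₁, c₂) > 0`.
-/

section Tiling

variable {G Q : Type*} [Group G] {E T A B : Set G} {p₁ p₂ : G → Q}

theorem exists_maximal_pairwiseDisjoint_smul (E : Set G) :
    ∃ T : Set G, Maximal (fun T : Set G => T.PairwiseDisjoint (· • E)) T :=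
  zorn_subset _ fun _ hc hchain =>
    ⟨_, (hchain.pairwiseDisjoint_sUnion _).2 hc, fun _ => Set.subset_sUnion_of_mem⟩

theorem Maximal.exists_inv_mul_mem_mul_inv
    (hT : Maximal (fun T : Set G => T.PairwiseDisjoint (· • E)) T) (hE : E.Nonempty) (g : G) :
    ∃ t ∈ T, t⁻¹ * g ∈ E * E⁻¹ := by
  by_cases hg : g ∈ T
  · obtain ⟨e, he⟩ := hE
    exact ⟨g, hg, by simpa using Set.mul_mem_mul he (Set.inv_mem_inv.2 he)⟩
  have hins : ¬(insert g T).PairwiseDisjoint (· • E) := fun h => hg (hT.mem_of_prop_insert h)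
  obtain ⟨t, ht, hnd⟩ : ∃ t ∈ T, ¬Disjoint (g • E) (t • E) := by
    simpa [Set.pairwiseDisjoint_insert_of_notMem hg, hT.prop] using hins
  obtain ⟨_, ⟨e₁, he₁, rfl⟩, e₂, he₂, he⟩ := Set.not_disjoint_iff.1 hnd
  refine ⟨t, ht, e₂, he₂, e₁⁻¹, Set.inv_mem_inv.2 he₁, ?_⟩
  simp only [smul_eq_mul] at he
  rw [eq_inv_mul_iff_mul_eq, ← mul_assoc, he, mul_inv_cancel_right]

open Classical in
noncomputable def tileConfig (E T A : Set G) (p₁ p₂ : G → Q) : G → Q := fun g =>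
  if h : ∃ t ∈ T, g ∈ t • E then (if h.choose ∈ A then p₂ else p₁) (h.choose⁻¹ * g) else p₁ g

open Classical in
theorem tileConfig_mul_apply (hT : T.PairwiseDisjoint (· • E)) {a x : G} (ha : a ∈ T)
    (hx : x ∈ E) : tileConfig E T A p₁ p₂ (a * x) = (if a ∈ A then p₂ else p₁) x := by
  have h : ∃ t ∈ T, a * x ∈ t • E := ⟨a, ha, Set.smul_mem_smul_set hx⟩
  have hch : h.choose = a :=
    hT.elim_set h.choose_spec.1 ha _ h.choose_spec.2 (Set.smul_mem_smul_set hx)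
  simp only [tileConfig, dif_pos h, hch, inv_mul_cancel_left]

open Classical in
theorem tileConfig_congr {g : G} (h : ∀ t ∈ T, g ∈ t • E → (t ∈ A ↔ t ∈ B)) :
    tileConfig E T A p₁ p₂ g = tileConfig E T B p₁ p₂ g := by
  by_cases hg : ∃ t ∈ T, g ∈ t • E
  · simp only [tileConfig, dif_pos hg]
    exact congrFun (if_congr (h _ hg.choose_spec.1 hg.choose_spec.2) rfl rfl) _
  · simp only [tileConfig, dif_neg hg]

end Tiling

section CellularAutomaton

variable {G Q : Type*} [Group G] {N E : Finset G} {f : (N → Q) → Q}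

theorem caMap_apply_congr {c c' : G → Q} {g : G} (h : ∀ x ∈ N, c (g * x) = c' (g * x)) :
    caMap N f c g = caMap N f c' g :=
  congrArg f (funext fun x => h x.1 x.2)

theorem caMap_comp_mul_left (c : G → Q) (a : G) :
    caMap N f (fun g => c (a * g)) = fun g => caMap N f c (a * g) := by
  funext g
  simp only [caMap, mul_assoc]

theorem MutuallyErasable.caMap_eq {p₁ p₂ c₁ c₂ : G → Q} (hME : MutuallyErasable N f E p₁ p₂)
    {a : G} (h₁ : ∀ x ∈ E, c₁ (a * x) = p₁ x) (h₂ : ∀ x ∈ E, c₂ (a * x) = p₂ x)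
    (h : ∀ x ∉ E, c₁ (a * x) = c₂ (a * x)) : caMap N f c₁ = caMap N f c₂ := by
  have key := hME (fun x => c₁ (a * x)) (fun x => c₂ (a * x)) h₁ h₂ h
  rw [caMap_comp_mul_left, caMap_comp_mul_left] at key
  funext g
  simpa using congrFun key (a⁻¹ * g)

end CellularAutomaton

section Erasure

variable {G Q : Type*} [Group G] {N E : Finset G} {f : (N → Q) → Q} {p₁ p₂ : G → Q}
  {T : Set G}

theorem caMap_tileConfig_insert (hT : T.PairwiseDisjoint (· • (E : Set G)))
    (hME : MutuallyErasable N f E p₁ p₂) {A : Set G} {a : G} (ha : a ∈ T) (haA : a ∉ A) :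
    caMap N f (tileConfig E T A p₁ p₂) = caMap N f (tileConfig E T (insert a A) p₁ p₂) := by
  classical
  refine hME.caMap_eq (a := a) (fun x hx => ?_) (fun x hx => ?_) (fun x hx => ?_)
  · rw [tileConfig_mul_apply hT ha hx, if_neg haA]
  · rw [tileConfig_mul_apply hT ha hx, if_pos (Set.mem_insert a A)]
  · refine tileConfig_congr fun t _ hxt => ?_
    have hta : t ≠ a := by
      rintro rfl
      exact hx (Set.smul_mem_smul_set_iff.1 hxt)
    simp [hta]

theorem caMap_tileConfig_empty_eq_finset (hT : T.PairwiseDisjoint (· • (E : Set G)))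
    (hME : MutuallyErasable N f E p₁ p₂) (S : Finset G) (hS : (S : Set G) ⊆ T) :
    caMap N f (tileConfig E T ∅ p₁ p₂) = caMap N f (tileConfig E T S p₁ p₂) := by
  classical
  induction S using Finset.induction_on with
  | empty => simp
  | insert a S ha ih =>
    rw [Finset.coe_insert, Set.insert_subset_iff] at hS
    rw [ih hS.2, Finset.coe_insert]
    exact caMap_tileConfig_insert hT hME hS.1 ha

theorem caMap_tileConfig_empty_eq_univ (hT : T.PairwiseDisjoint (· • (E : Set G)))
    (hME : MutuallyErasable N f E p₁ p₂) :
    caMap N f (tileConfig E T ∅ p₁ p₂) = caMap N f (tileConfig E T Set.univ p₁ p₂) := by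
  classical
  funext g
  -- the tiles meeting `g • N`
  let S : Finset G := ((g • N) * E⁻¹).filter (· ∈ T)
  rw [congrFun (caMap_tileConfig_empty_eq_finset hT hME S fun t ht => (Finset.mem_filter.1 ht).2)]
  refine caMap_apply_congr fun x hx => tileConfig_congr fun t ht ⟨e, he, hxt⟩ => ?_
  simp only [Finset.mem_coe, Set.mem_univ, iff_true, S, Finset.mem_filter]
  refine ⟨?_, ht⟩
  simp only [smul_eq_mul] at hxt
  rw [← mul_inv_cancel_right t e, hxt]
  exact Finset.mul_mem_mul (Finset.smul_mem_smul_finset hx) (Finset.inv_mem_inv he)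

end Erasure

section Density

variable {G Q : Type*}

theorem hamDist_le_card (Y : Finset G) (c₁ c₂ : G → Q) : hamDist (Y : Set G) c₁ c₂ ≤ Y.card := by
  rw [hamDist, ← Set.ncard_coe_finset Y]
  exact Set.ncard_le_ncard (Set.sep_subset _ _) Y.finite_toSet

theorem card_filter_le_hamDist {D : Set G} [DecidablePred (· ∈ D)] {c₁ c₂ : G → Q}
    (hne : ∀ d ∈ D, c₁ d ≠ c₂ d) (Y : Finset G) :
    (Y.filter (· ∈ D)).card ≤ hamDist (Y : Set G) c₁ c₂ := by
  rw [hamDist, ← Set.ncard_coe_finset]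
  refine Set.ncard_le_ncard (fun x hx => ?_) (Y.finite_toSet.subset (Set.sep_subset _ _))
  rw [Finset.coe_filter] at hx
  exact ⟨hx.1, hne x hx.2⟩

theorem besDist_self (X : ℕ → Finset G) (c : G → Q) : besDist X c c = 0 := by
  simp [besDist, hamDist]

theorem IsExhaustive.eventually_nonempty [Nonempty G] {X : ℕ → Finset G} (hX : IsExhaustive X) :
    ∀ᶠ n in atTop, (X n).Nonempty := by
  obtain ⟨n₀, hn₀⟩ := hX.2 (Classical.arbitrary G)
  exact eventually_atTop.2 ⟨n₀, fun _ hn => ⟨_, monotone_nat_of_le_succ hX.1 hn hn₀⟩⟩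

variable [Group G] [DecidableEq G] {D : Set G} [DecidablePred (· ∈ D)] {L : Finset G}

theorem card_le_card_mul_card_filter_mem (hD : ∀ g, ∃ d ∈ D, d⁻¹ * g ∈ L) (Y : Finset G) :
    Y.card ≤ L.card * ((Y * L⁻¹).filter (· ∈ D)).card := by
  calc Y.card ≤ (((Y * L⁻¹).filter (· ∈ D)).biUnion (· • L)).card := by
        refine Finset.card_le_card fun y hy => ?_
        obtain ⟨d, hd, hdy⟩ := hD y
        refine Finset.mem_biUnion.2 ⟨d, Finset.mem_filter.2 ⟨?_, hd⟩, ?_⟩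
        · simpa using Finset.mul_mem_mul hy (Finset.inv_mem_inv hdy)
        · simpa using Finset.smul_mem_smul_finset (a := d) hdy
    _ ≤ ∑ d ∈ (Y * L⁻¹).filter (· ∈ D), (d • L).card := Finset.card_biUnion_le
    _ = L.card * ((Y * L⁻¹).filter (· ∈ D)).card := by
        simp [Finset.card_smul_finset, mul_comm]

theorem card_div_card_sub_card_sdiff_le (hL : L.Nonempty) (hD : ∀ g, ∃ d ∈ D, d⁻¹ * g ∈ L)
    (Y : Finset G) :
    (Y.card : ℝ) / L.card - ((Y * L⁻¹) \ Y).card ≤ (Y.filter (· ∈ D)).card := by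
  have hcover := card_le_card_mul_card_filter_mem hD Y
  have hboundary : ((Y * L⁻¹).filter (· ∈ D)).card ≤
      (Y.filter (· ∈ D)).card + ((Y * L⁻¹) \ Y).card := by
    refine (Finset.card_le_card fun t ht => ?_).trans (Finset.card_union_le _ _)
    rw [Finset.mem_filter] at ht
    by_cases htY : t ∈ Y
    · exact Finset.mem_union_left _ (Finset.mem_filter.2 ⟨htY, ht.2⟩)
    · exact Finset.mem_union_right _ (Finset.mem_sdiff.2 ⟨ht.1, htY⟩)
  have hLpos : (0 : ℝ) < L.card := by exact_mod_cast hL.card_pos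
  rw [sub_le_iff_le_add, div_le_iff₀ hLpos]
  calc (Y.card : ℝ) ≤ L.card * ((Y * L⁻¹).filter (· ∈ D)).card := by exact_mod_cast hcover
    _ ≤ _ := by
        rw [mul_comm]
        gcongr
        exact_mod_cast hboundary

theorem besDist_pos_of_ne_on_syndetic {X : ℕ → Finset G}
    (hsub : ∃ φ : ℕ → ℕ, StrictMono φ ∧ IsFolner (fun n => X (φ n)))
    (hL : L.Nonempty) (hD : ∀ g, ∃ d ∈ D, d⁻¹ * g ∈ L) {c₁ c₂ : G → Q}
    (hne : ∀ d ∈ D, c₁ d ≠ c₂ d) : 0 < besDist X c₁ c₂ := by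
  obtain ⟨φ, hφ, hFol⟩ := hsub
  have hLpos : (0 : ℝ) < L.card := by exact_mod_cast hL.card_pos
  set δ : ℝ := 1 / (2 * L.card)
  have hδ : 0 < δ := by positivity
  have hbdd : IsBoundedUnder (· ≤ ·) atTop
      fun n => (hamDist (X n : Set G) c₁ c₂ : ℝ) / (X n).card :=
    isBoundedUnder_of ⟨1, fun n =>
      div_le_one_of_le₀ (by exact_mod_cast hamDist_le_card _ _ _) (by positivity)⟩
  have hdense : ∀ᶠ m in atTop,
      δ ≤ (hamDist (X (φ m) : Set G) c₁ c₂ : ℝ) / (X (φ m)).card := by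
    filter_upwards [hFol.1.eventually_nonempty, (hFol.2 L).eventually_lt_const hδ]
      with m hY hboundary
    have hYpos : (0 : ℝ) < (X (φ m)).card := by exact_mod_cast hY.card_pos
    have hcount := card_div_card_sub_card_sdiff_le hL hD (X (φ m))
    have hham : (((X (φ m)).filter (· ∈ D)).card : ℝ) ≤ hamDist (X (φ m) : Set G) c₁ c₂ := by
      exact_mod_cast card_filter_le_hamDist hne _
    rw [div_lt_iff₀ hYpos] at hboundary
    have hδY : (X (φ m)).card / L.card = 2 * δ * (X (φ m)).card := by
      simp only [δ]; field_simp
    rw [le_div_iff₀ hYpos]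
    linarith
  exact hδ.trans_le (le_limsup_of_frequently_le (hφ.tendsto_atTop.frequently hdense.frequently) hbdd)

end Density

theorem besicovitch_injective_implies_preinjective_general {G Q : Type*} [Group G]
    [DecidableEq G]
    (X : ℕ → Finset G)
    (hsub : ∃ φ : ℕ → ℕ, StrictMono φ ∧ IsFolner (fun n => X (φ n)))
    (N : Finset G) (f : (N → Q) → Q)
    (hBinj : ∀ c₁ c₂ : G → Q, 0 < besDist X c₁ c₂ →
      0 < besDist X (caMap N f c₁) (caMap N f c₂)) :
    ¬∃ (E : Finset G) (p₁ p₂ : G → Q),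
      ¬Set.EqOn p₁ p₂ (E : Set G) ∧ MutuallyErasable N f E p₁ p₂ := by
  classical
  rintro ⟨E, p₁, p₂, hne, hME⟩
  obtain ⟨g₀, hg₀E, hg₀⟩ : ∃ g₀ ∈ (E : Set G), p₁ g₀ ≠ p₂ g₀ := by
    simpa [Set.EqOn] using hne
  have hE : E.Nonempty := ⟨g₀, hg₀E⟩
  obtain ⟨T, hT⟩ := exists_maximal_pairwiseDisjoint_smul (E : Set G)
  let c₁ := tileConfig E T ∅ p₁ p₂
  let c₂ := tileConfig E T Set.univ p₁ p₂
  have hdiff : ∀ d ∈ (· * g₀) '' T, c₁ d ≠ c₂ d := by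
    rintro _ ⟨t, ht, rfl⟩
    simpa [c₁, c₂, tileConfig_mul_apply hT.prop ht hg₀E] using hg₀
  have hsynd : ∀ g, ∃ d ∈ (· * g₀) '' T, d⁻¹ * g ∈ g₀⁻¹ • (E * E⁻¹) := fun g => by
    obtain ⟨t, ht, hg⟩ := hT.exists_inv_mul_mem_mul_inv (Finset.coe_nonempty.2 hE) g
    refine ⟨t * g₀, ⟨t, ht, rfl⟩, ?_⟩
    rw [mul_inv_rev, mul_assoc]
    exact Finset.smul_mem_smul_finset (by exact_mod_cast hg)
  have hpos := hBinj c₁ c₂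
    (besDist_pos_of_ne_on_syndetic hsub ((hE.mul hE.inv).smul_finset) hsynd hdiff)
  rw [caMap_tileConfig_empty_eq_univ hT.prop hME, besDist_self] at hpos
  exact lt_irrefl 0 hpos

/-- A Besicovitch injective CA (w.r.t. an exhaustive sequence containing an
amenable subsequence) is preinjective: it has no pair of mutually erasable patterns. -/
theorem besicovitch_injective_implies_preinjective {G Q : Type*} [Group G]
    [DecidableEq G] [Fintype Q] (hQ : 2 ≤ Fintype.card Q)
    (X : ℕ → Finset G) (hX : IsExhaustive X)
    (hsub : ∃ φ : ℕ → ℕ, StrictMono φ ∧ IsFolner (fun n => X (φ n)))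
    (N : Finset G) (hN : N.Nonempty) (f : (N → Q) → Q)
    (hBinj : ∀ c₁ c₂ : G → Q, 0 < besDist X c₁ c₂ →
      0 < besDist X (caMap N f c₁) (caMap N f c₂)) :
    ¬∃ (E : Finset G) (p₁ p₂ : G → Q),
      ¬Set.EqOn p₁ p₂ (E : Set G) ∧ MutuallyErasable N f E p₁ p₂ :=
  besicovitch_injective_implies_preinjective_general X hsub N f hBinj
end
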